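/- If ρ/(1−ρ) > ω(B) for a particular set estimator Θ̂_B, where ρ = λ(B) and ω(B) is the true coverage odds, then the statistician's expected loss satisfies E_{⟨θ,γ⟩}[L_B(Θ̂;X)] = (1−ρ)·P_{⟨θ,γ⟩}(θ ∉ Θ̂_B(X))·(ρ/(1−ρ) − ω(B)) > 0; symmetrically, if ρ/(1−ρ) < ω(B) then E_{⟨θ,γ⟩}[L_B(Θ̂;X)] = (1−ρ)·P_{⟨θ,γ⟩}(θ ∉ Θ̂_B(X))·(ω(B) − ρ/(1−ρ)) > 0. Hence the expected loss is zero if and only if ρ equals the true coverage probability. -/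

import Mathlib

/-- with true coverage probability p, fair odds ω = p/(1−p) and
nominal level ρ, the statistician's expected loss in the betting game is
(1−ρ)·(1−p)·|ρ/(1−ρ) − ω| in the two unequal-odds cases (hence positive), and
it vanishes exactly when ρ equals the true coverage probability p. -/
theorem stmt10 (p ρ : ℝ) (hp : p ∈ Set.Ioo (0:ℝ) 1) (hρ : ρ ∈ Set.Ioo (0:ℝ) 1)
    (ω : ℝ) (hω : ω = p / (1 - p))
    (E : ℝ)
    (hE : E = if ρ / (1 - ρ) > ω then ρ * (1 - p) - (1 - ρ) * p
      else if ρ / (1 - ρ) < ω then (1 - ρ) * p - ρ * (1 - p)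
      else 0) :
    (ρ / (1 - ρ) > ω →
      E = (1 - ρ) * (1 - p) * (ρ / (1 - ρ) - ω) ∧ 0 < E) ∧
    (ρ / (1 - ρ) < ω →
      E = (1 - ρ) * (1 - p) * (ω - ρ / (1 - ρ)) ∧ 0 < E) ∧
    (E = 0 ↔ ρ = p) := by
  obtain ⟨hp0, hp1⟩ := hp
  obtain ⟨hρ0, hρ1⟩ := hρ
  have h1p : (0:ℝ) < 1 - p := by linarith
  have h1ρ : (0:ℝ) < 1 - ρ := by linarith
  have key : ∀ x y : ℝ, x / (1 - ρ) < y / (1 - ρ) ↔ x < y := fun x y =>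
    div_lt_div_iff_of_pos_right h1ρ
  subst hω
  have hid : ∀ a b : ℝ, (1 - ρ) * (1 - p) * (a / (1 - ρ) - b / (1 - p))
      = a * (1 - p) - (1 - ρ) * b := by
    intro a b; field_simp
  refine ⟨?_, ?_, ?_⟩
  · intro h
    rw [hE, if_pos h]
    constructor
    · exact (hid ρ p).symm
    · have : 0 < (1 - ρ) * (1 - p) * (ρ / (1 - ρ) - p / (1 - p)) := by
        apply mul_pos (mul_pos h1ρ h1p); linarith
      rw [hid] at this; exact this
  · intro h
    rw [hE, if_neg (not_lt.mpr h.le), if_pos h]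
    constructor
    · have := hid p ρ
      rw [show (1 - ρ) * (1 - p) * (p / (1 - p) - ρ / (1 - ρ))
          = -((1 - ρ) * (1 - p) * (ρ / (1 - ρ) - p / (1 - p))) by ring, hid]
      ring
    · have : 0 < (1 - ρ) * (1 - p) * (p / (1 - p) - ρ / (1 - ρ)) := by
        apply mul_pos (mul_pos h1ρ h1p); linarith
      have heq : (1 - ρ) * (1 - p) * (p / (1 - p) - ρ / (1 - ρ))
          = (1 - ρ) * p - ρ * (1 - p) := by field_simp
      linarith [heq ▸ this]
  · constructor
    · intro hE0
      rcases lt_trichotomy (ρ / (1 - ρ)) (p / (1 - p)) with h | h | h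
      · rw [hE, if_neg (not_lt.mpr h.le), if_pos h] at hE0
        nlinarith
      · have : ρ * (1 - p) = p * (1 - ρ) := by
          field_simp at h; linarith
        nlinarith
      · rw [hE, if_pos h] at hE0
        nlinarith [(div_lt_div_iff₀ h1p h1ρ).mp h]
    · intro hρp
      subst hρp
      rw [hE, if_neg (lt_irrefl _), if_neg (lt_irrefl _)]
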